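/- Compatibility of the capacity of entanglement with the antiflatness ordering: let p, q be strictly positive probability vectors on Fin d (all entries positive). If for all 0 < α < β one has S α p - S β p ≤ S α q - S β q, then V p ≤ V q. -/

import Mathlib

/-!
Writing `G x = ∑ i, p i ^ x`, one has `S x p = log (G x) / (1 - x)` and `G 1 = 1`, so
`(S x p - S 1 p) / (x - 1) = -(log G x + S 1 p * (x - 1)) / (x - 1) ^ 2`. The numerator vanishes
to second order at `x = 1` and its second derivative there is the variance `V p` of `log p` under
`p`, so by L'Hôpital this quotient tends to `-V p / 2` as `x → 1`. The hypothesis with `α = 1` and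
`β = x > 1` orders these quotients for `p` and `q`, and the limit `x → 1⁺` gives `V p ≤ V q`.
-/

/-- Rényi entropy of a probability vector `p` on `Fin d`
(Shannon entropy at `α = 1`; powers are `Real.rpow`). -/
noncomputable def S {d : ℕ} (α : ℝ) (p : Fin d → ℝ) : ℝ :=
  if α = 1 then -(∑ i, p i * Real.log (p i))
  else (1 - α)⁻¹ * Real.log (∑ i, (p i) ^ α)

/-- The capacity of entanglement (varentropy) of a strictly positive
probability vector. -/
noncomputable def V {d : ℕ} (p : Fin d → ℝ) : ℝ :=
  (∑ i, p i * (Real.log (p i)) ^ 2) - (∑ i, p i * Real.log (p i)) ^ 2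

open Real Filter Topology Finset

theorem tendsto_div_sub_sq_of_hasDerivAt {f f' : ℝ → ℝ} {a c : ℝ}
    (hf : ∀ᶠ x in 𝓝 a, HasDerivAt f (f' x) x) (hfa : f a = 0) (hf'a : f' a = 0)
    (hf' : HasDerivAt f' c a) :
    Tendsto (fun x => f x / (x - a) ^ 2) (𝓝[≠] a) (𝓝 (c / 2)) := by
  have hdiv : Tendsto (fun x => f' x / (2 * (x - a))) (𝓝[≠] a) (𝓝 (c / 2)) := by
    refine ((hasDerivAt_iff_tendsto_slope.mp hf').div_const 2).congr' ?_
    filter_upwards with x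
    rw [slope_def_field, hf'a, sub_zero, div_div, mul_comm]
  have hsq : ∀ x, HasDerivAt (fun y => (y - a) ^ 2) (2 * (x - a)) x := fun x => by
    simpa using ((hasDerivAt_id x).sub_const a).fun_pow 2
  have hf_lim : Tendsto f (𝓝[≠] a) (𝓝 0) :=
    hfa ▸ hf.self_of_nhds.continuousAt.tendsto.mono_left nhdsWithin_le_nhds
  have hsq_lim : Tendsto (fun x => (x - a) ^ 2) (𝓝[≠] a) (𝓝 0) := by
    simpa using (hsq a).continuousAt.tendsto.mono_left nhdsWithin_le_nhds
  refine HasDerivAt.lhopital_zero_nhdsNE (nhdsWithin_le_nhds hf) (.of_forall hsq) ?_ hf_lim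
    hsq_lim hdiv
  filter_upwards [self_mem_nhdsWithin] with x hx
  exact mul_ne_zero two_ne_zero (sub_ne_zero.mpr hx)

section PowerSums

variable {ι : Type*} [Fintype ι] {p : ι → ℝ}

theorem hasDerivAt_sum_rpow_mul_log_pow (hp : ∀ i, 0 < p i) (n : ℕ) (x : ℝ) :
    HasDerivAt (fun y => ∑ i, p i ^ y * log (p i) ^ n)
      (∑ i, p i ^ x * log (p i) ^ (n + 1)) x :=
  HasDerivAt.fun_sum fun i _ =>
    ((hasStrictDerivAt_const_rpow (hp i) x).hasDerivAt.mul_const _).congr_deriv (by ring)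

theorem hasDerivAt_sum_rpow (hp : ∀ i, 0 < p i) (x : ℝ) :
    HasDerivAt (fun y => ∑ i, p i ^ y) (∑ i, p i ^ x * log (p i)) x := by
  simpa using hasDerivAt_sum_rpow_mul_log_pow hp 0 x

theorem sum_rpow_pos [Nonempty ι] (hp : ∀ i, 0 < p i) (x : ℝ) : 0 < ∑ i, p i ^ x :=
  sum_pos (fun i _ => rpow_pos_of_pos (hp i) x) univ_nonempty

theorem hasDerivAt_log_sum_rpow [Nonempty ι] (hp : ∀ i, 0 < p i) (x : ℝ) :
    HasDerivAt (fun y => log (∑ i, p i ^ y)) ((∑ i, p i ^ x * log (p i)) / ∑ i, p i ^ x) x :=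
  (hasDerivAt_sum_rpow hp x).log (sum_rpow_pos hp x).ne'

/-- The function differentiated here is the mean of `log p` under the escort distribution
`p ^ y / ∑ p ^ y`. -/
theorem hasDerivAt_escort_mean_log_one (hp : ∀ i, 0 < p i) (hp1 : ∑ i, p i = 1) :
    HasDerivAt (fun y : ℝ => (∑ i, p i ^ y * log (p i)) / ∑ i, p i ^ y)
      ((∑ i, p i * log (p i) ^ 2) - (∑ i, p i * log (p i)) ^ 2) 1 := by
  have h := (by simpa using hasDerivAt_sum_rpow_mul_log_pow hp 1 1 :
    HasDerivAt (fun y : ℝ => ∑ i, p i ^ y * log (p i)) (∑ i, p i * log (p i) ^ 2) 1).div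
    (hasDerivAt_sum_rpow hp 1) (by simp [hp1])
  simp only [rpow_one, hp1] at h
  exact h.congr_deriv (by ring)

end PowerSums

theorem S_one {d : ℕ} (p : Fin d → ℝ) : S 1 p = -∑ i, p i * log (p i) := if_pos rfl

theorem S_of_ne_one {d : ℕ} {α : ℝ} (p : Fin d → ℝ) (hα : α ≠ 1) :
    S α p = (1 - α)⁻¹ * log (∑ i, p i ^ α) := if_neg hα

theorem S_sub_S_one_div {d : ℕ} {x : ℝ} (p : Fin d → ℝ) (hx : x ≠ 1) :
    (S x p - S 1 p) / (x - 1) =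
      -((log (∑ i, p i ^ x) - (∑ i, p i * log (p i)) * (x - 1)) / (x - 1) ^ 2) := by
  have hx₁ : x - 1 ≠ 0 := sub_ne_zero.mpr hx
  have hx₂ : 1 - x ≠ 0 := sub_ne_zero.mpr hx.symm
  rw [S_of_ne_one p hx, S_one]
  field_simp
  ring

theorem tendsto_S_sub_S_one_div {d : ℕ} (p : Fin d → ℝ) (hp : ∀ i, 0 < p i)
    (hp1 : ∑ i, p i = 1) :
    Tendsto (fun x => (S x p - S 1 p) / (x - 1)) (𝓝[≠] 1) (𝓝 (-(V p) / 2)) := by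
  have : NeZero d := ⟨by rintro rfl; simp at hp1⟩
  set L := ∑ i, p i * log (p i)
  have hf : ∀ x, HasDerivAt (fun y => log (∑ i, p i ^ y) - L * (y - 1))
      ((∑ i, p i ^ x * log (p i)) / (∑ i, p i ^ x) - L) x := fun x =>
    ((hasDerivAt_log_sum_rpow hp x).fun_sub
      (((hasDerivAt_id' x).sub_const 1).const_mul L)).congr_deriv (by ring)
  have hlim := tendsto_div_sub_sq_of_hasDerivAt (.of_forall hf) (by simp [hp1])
    (by simp [hp1, L]) ((hasDerivAt_escort_mean_log_one hp hp1).sub_const L)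
  refine (neg_div _ (V p) ▸ hlim.neg).congr' ?_
  filter_upwards [self_mem_nhdsWithin] with x hx
  exact (S_sub_S_one_div p hx).symm

/-- Compatibility of the capacity of entanglement with the antiflatness
ordering. -/
theorem capacity_compatible_with_antiflat_order {d : ℕ} (p q : Fin d → ℝ)
    (hp : ∀ i, 0 < p i) (hp1 : ∑ i, p i = 1)
    (hq : ∀ i, 0 < q i) (hq1 : ∑ i, q i = 1)
    (hspread : ∀ α β : ℝ, 0 < α → α < β → S α p - S β p ≤ S α q - S β q) :
    V p ≤ V q := by
  have hright : 𝓝[>] (1 : ℝ) ≤ 𝓝[≠] 1 := nhdsGT_le_nhdsNE 1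
  have hle : -(V q) / 2 ≤ -(V p) / 2 := by
    refine le_of_tendsto_of_tendsto ((tendsto_S_sub_S_one_div q hq hq1).mono_left hright)
      ((tendsto_S_sub_S_one_div p hp hp1).mono_left hright) ?_
    filter_upwards [self_mem_nhdsWithin] with x (hx : 1 < x)
    have := hspread 1 x one_pos hx
    exact div_le_div_of_nonneg_right (by linarith) (by linarith)
  linarith
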